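/- Let N, d ≥ 1 and for each proper subset I ⊊ {1,…,d} let ν_I : (ZMod N)^I → ℝ be a nonnegative function. Then: (a) for every f : (ZMod N)^d → ℝ the diagonal weighted Gowers inner product ⟨(f_ω)⟩_{□,ν} with f_ω = f for all ω is nonnegative; and (b) for every family of functions f_ω : (ZMod N)^d → ℝ (ω ∈ {0,1}^d), |⟨(f_ω)⟩_{□,ν}| ≤ ∏_{ω ∈ {0,1}^d} ‖f_ω‖_{□,ν} (Gowers–Cauchy–Schwarz inequality). -/

import Mathlib

noncomputable section
open Finset

/-- `P_ω(x,y)`: the point whose `i`-th coordinate is `x i` if `ω i = false` and `y i` otherwise. -/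
def proj {ι : Type*} {N : ℕ} (ω : ι → Bool) (x y : ι → ZMod N) : ι → ZMod N :=
  fun i => if ω i then y i else x i

/-- `P_{ω_I}(x_I, y_I)` as a function on the subtype `↥I`. -/
def projI {ι : Type*} {N : ℕ} {I : Finset ι} (ω : I → Bool) (x y : ι → ZMod N) :
    I → ZMod N :=
  fun i => if ω i then y i.1 else x i.1

/-- The product of the weights `ν_I(P_{ω_I}(x_I,y_I))` over proper subsets `I ⊊ ι`
and all `ω_I ∈ {0,1}^I`. -/
def weightProd {ι : Type*} [Fintype ι] [DecidableEq ι] {N : ℕ}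
    (ν : (I : Finset ι) → (I → ZMod N) → ℝ) (x y : ι → ZMod N) : ℝ :=
  ∏ I ∈ univ.filter (fun I : Finset ι => I ≠ univ), ∏ ω : I → Bool, ν I (projI ω x y)

/-- The weighted Gowers inner product `⟨(f_ω)⟩_{□,ν}`. -/
def gowersInner {ι : Type*} [Fintype ι] [DecidableEq ι] {N : ℕ} [NeZero N]
    (ν : (I : Finset ι) → (I → ZMod N) → ℝ)
    (f : (ι → Bool) → (ι → ZMod N) → ℝ) : ℝ :=
  Finset.expect Finset.univ fun x : ι → ZMod N =>
    Finset.expect Finset.univ fun y : ι → ZMod N =>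
      (∏ ω : ι → Bool, f ω (proj ω x y)) * weightProd ν x y

/-- The weighted box norm `‖f‖_{□,ν}`. -/
def boxNorm {ι : Type*} [Fintype ι] [DecidableEq ι] {N : ℕ} [NeZero N]
    (ν : (I : Finset ι) → (I → ZMod N) → ℝ) (f : (ι → ZMod N) → ℝ) : ℝ :=
  gowersInner ν (fun _ => f) ^ (((2 : ℝ) ^ (Fintype.card ι))⁻¹)

/-!
Fix a coordinate `i`. Every factor of the Gowers integrand reads `x i` (if it lies on the face
`ω i = 0`), or `y i` (face `ω i = 1`), or neither (weights `ν_I` with `i ∉ I`). Averaging over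
`x i` and `y i` therefore writes `⟨(f_ω)⟩` as `𝔼 u v w` with `w ≥ 0`, and the two families
obtained by freezing `ω i` to `0` or to `1` give `𝔼 u² w` and `𝔼 v² w`. Hence these are
nonnegative, and by Cauchy–Schwarz `⟨(f_ω)⟩² ≤ ⟨(f_ω)|ω_i=0⟩ ⟨(f_ω)|ω_i=1⟩`. Freezing all `d`
coordinates one after the other gives `|⟨(f_ω)⟩|^(2^d) ≤ ∏_ω ‖f_ω‖^(2^d)`.
-/

open Function
open scoped BigOperators

section BooleanCube

variable {ι : Type*} [DecidableEq ι]

lemma piecewise_insert_update {β : Type*} {s : Finset ι} {a : ι} (ha : a ∉ s)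
    (τ ω : ι → β) (c : β) :
    (insert a s).piecewise (update τ a c) ω = s.piecewise τ (update ω a c) := by
  rw [piecewise_insert, update_self, ← update_piecewise_of_notMem _ _ _ ha]
  congr 1
  exact s.piecewise_congr (fun j hj => update_of_ne (ne_of_mem_of_not_mem hj ha) _ _)
    fun _ _ => rfl

variable [Fintype ι]

lemma prod_update_false_mul_update_true {M : Type*} [CommMonoid M] (G : (ι → Bool) → M)
    (a : ι) : ∏ τ, G (update τ a false) * G (update τ a true) = (∏ τ, G τ) ^ 2 := by
  have hflip : Involutive fun τ : ι → Bool => update τ a (!τ a) := fun τ => by simp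
  calc ∏ τ, G (update τ a false) * G (update τ a true)
      = ∏ τ, G τ * G (update τ a (!τ a)) :=
        prod_congr rfl fun τ _ => by
          cases h : τ a
          · rw [Bool.not_false, ← h, update_eq_self]
          · rw [Bool.not_true, ← h, update_eq_self, mul_comm]
    _ = (∏ τ, G τ) ^ 2 := by rw [prod_mul_distrib, hflip.bijective.prod_comp G, sq]

theorem abs_pow_le_abs_prod_of_sq_le {X : Type*} (Φ : ((ι → Bool) → X) → ℝ)
    (hΦ : ∀ g i, Φ g ^ 2 ≤ Φ (fun ω => g (update ω i false)) * Φ (fun ω => g (update ω i true)))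
    (g : (ι → Bool) → X) : |Φ g| ^ 2 ^ Fintype.card ι ≤ |∏ ω, Φ (fun _ => g ω)| := by
  -- `M s` freezes the coordinates in `s` to `τ`, so `M ∅ = Φ g ^ 2 ^ card ι` and `M univ` is
  -- the product of `Φ` over the constant families.
  let M : Finset ι → ℝ := fun s => ∏ τ, Φ (fun ω => g (s.piecewise τ ω))
  have step : ∀ a s, a ∉ s → |M s| ≤ |M (insert a s)| := fun a s ha => sq_le_sq.mp <|
    calc M s ^ 2 = ∏ τ, Φ (fun ω => g (s.piecewise τ ω)) ^ 2 := (prod_pow ..).symm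
      _ ≤ ∏ τ, Φ (fun ω => g (s.piecewise τ (update ω a false)))
            * Φ (fun ω => g (s.piecewise τ (update ω a true))) :=
        prod_le_prod (fun _ _ => sq_nonneg _) fun τ _ => hΦ _ a
      _ = M (insert a s) ^ 2 := by
        simp_rw [← piecewise_insert_update ha]
        exact prod_update_false_mul_update_true
          (fun τ => Φ fun ω => g ((insert a s).piecewise τ ω)) a
  have hmono : ∀ s, |M ∅| ≤ |M s| := fun s =>
    Finset.induction_on s le_rfl fun a s ha ih => ih.trans (step a s ha)
  simpa [M, abs_pow] using hmono univ

end BooleanCube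

section Expectation

variable {ι α M : Type*} [Fintype ι] [DecidableEq ι] [Fintype α] [Nonempty α]
  [AddCommMonoid M] [Module ℚ≥0 M]

lemma expect_expect_update (i : ι) (h : (ι → α) → M) :
    𝔼 x, 𝔼 a, h (update x i a) = 𝔼 x, h x := by
  have hswap : Involutive fun p : (ι → α) × α => (update p.1 i p.2, p.1 i) := fun p => by simp
  calc 𝔼 x, 𝔼 a, h (update x i a) = 𝔼 p : (ι → α) × α, h (update p.1 i p.2) := by
        rw [← univ_product_univ, expect_product]
    _ = 𝔼 p : (ι → α) × α, h p.1 :=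
        Fintype.expect_bijective _ hswap.bijective _ _ fun _ => rfl
    _ = 𝔼 x, h x := by rw [← univ_product_univ, expect_product]; simp

lemma expect_expect_eq_expect_update_update (i : ι) (F : (ι → α) → (ι → α) → M) :
    𝔼 x, 𝔼 y, F x y = 𝔼 x, 𝔼 y, 𝔼 a, 𝔼 b, F (update x i a) (update y i b) := by
  symm
  calc 𝔼 x, 𝔼 y, 𝔼 a, 𝔼 b, F (update x i a) (update y i b)
      = 𝔼 x, 𝔼 a, 𝔼 y, 𝔼 b, F (update x i a) (update y i b) :=
        expect_congr rfl fun _ _ => expect_comm ..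
    _ = 𝔼 x, 𝔼 a, 𝔼 y, F (update x i a) y :=
        expect_congr rfl fun x _ => expect_congr rfl fun a _ =>
          expect_expect_update i (F (update x i a))
    _ = 𝔼 x, 𝔼 y, F x y := expect_expect_update i fun x => 𝔼 y, F x y

end Expectation

lemma expect_mul_mul_sq_le {α : Type*} [Fintype α] (P Q w : α → ℝ) (hw : ∀ a, 0 ≤ w a) :
    (𝔼 a, P a * Q a * w a) ^ 2 ≤ (𝔼 a, P a ^ 2 * w a) * 𝔼 a, Q a ^ 2 * w a := by
  have h := expect_mul_sq_le_sq_mul_sq univ (fun a => P a * √(w a)) (fun a => Q a * √(w a))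
  have hsq : ∀ a, √(w a) ^ 2 = w a := fun a => Real.sq_sqrt (hw a)
  have hPQ : ∀ a, P a * √(w a) * (Q a * √(w a)) = P a * Q a * w a := fun a => by
    rw [mul_mul_mul_comm, ← sq, hsq]
  simpa only [hPQ, mul_pow, hsq] using h

section Face

variable {κ : Type*} [DecidableEq κ] {N : ℕ}

lemma proj_update_update (ω : κ → Bool) (x y : κ → ZMod N) (i : κ) (s t : ZMod N) :
    proj ω (update x i s) (update y i t) = update (proj ω x y) i (bif ω i then t else s) := by
  funext j
  rcases eq_or_ne j i with rfl | hj
  · cases h : ω j <;> simp [proj, h]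
  · simp [proj, update_of_ne hj]

variable [Fintype κ]

def faceProd (g : (κ → Bool) → (κ → ZMod N) → ℝ) (i : κ) (b : Bool) (x y : κ → ZMod N) : ℝ :=
  ∏ ω ∈ univ.filter (· i = b), g ω (proj ω x y)

variable (g : (κ → Bool) → (κ → ZMod N) → ℝ) (i : κ)

lemma prod_eq_faceProd_mul_faceProd (x y : κ → ZMod N) :
    ∏ ω, g ω (proj ω x y) = faceProd g i false x y * faceProd g i true x y := by
  rw [faceProd, faceProd, ← prod_filter_mul_prod_filter_not univ (· i = false)]
  simp

lemma faceProd_update_update (b : Bool) (x y : κ → ZMod N) (s t : ZMod N) :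
    faceProd g i b (update x i s) (update y i t)
      = faceProd g i b (update x i (bif b then t else s)) (update y i (bif b then t else s)) :=
  prod_congr rfl fun ω hω => by
    rw [proj_update_update, proj_update_update, (mem_filter.mp hω).2, Bool.cond_self]

lemma faceProd_comp_update_self (b : Bool) :
    faceProd (fun ω => g (update ω i b)) i b = faceProd g i b := by
  funext x y
  exact prod_congr rfl fun ω hω => by
    dsimp only
    rw [← (mem_filter.mp hω).2, update_eq_self]

/-- Moving `ω` from the face `!b` to the face `b` exchanges the `i`-th coordinates of `x`
and `y`. -/
lemma faceProd_comp_update_not (b : Bool) (x y : κ → ZMod N) :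
    faceProd (fun ω => g (update ω i b)) i (!b) x y
      = faceProd g i b (update x i (y i)) (update y i (x i)) := by
  refine prod_nbij' (update · i b) (update · i (!b)) (by simp) (by simp) ?_ ?_ ?_
  · intro ω hω
    rw [update_idem, ← (mem_filter.mp hω).2, update_eq_self]
  · intro ω hω
    rw [update_idem, ← (mem_filter.mp hω).2, update_eq_self]
  · intro ω hω
    have hωi : ω i = !b := (mem_filter.mp hω).2
    dsimp only
    rw [proj_update_update, update_self]
    congr 1
    funext j
    rcases eq_or_ne j i with rfl | hj
    · cases b <;> simp [proj, hωi]
    · simp [proj, update_of_ne hj]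

end Face

lemma restrict_update_of_mem {ι α : Type*} [DecidableEq ι] {I : Finset ι} {i : ι} (h : i ∈ I)
    (x : ι → α) (a : α) : I.restrict (update x i a) = update (I.restrict x) ⟨i, h⟩ a :=
  update_comp_eq_of_injective x Subtype.val_injective ⟨i, h⟩ a

lemma restrict_update_of_notMem {ι α : Type*} [DecidableEq ι] {I : Finset ι} {i : ι}
    (h : i ∉ I) (x : ι → α) (a : α) : I.restrict (update x i a) = I.restrict x :=
  funext fun j => update_of_ne (ne_of_mem_of_not_mem j.2 h) _ _

section GowersFace

variable {ι : Type*} [Fintype ι] [DecidableEq ι] {N : ℕ}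
  (ν : (I : Finset ι) → (I → ZMod N) → ℝ) (f : (ι → Bool) → (ι → ZMod N) → ℝ) (i : ι)

def gowersFace (b : Bool) (x y : ι → ZMod N) : ℝ :=
  faceProd f i b x y * ∏ I ∈ univ.filter (· ≠ univ),
    if h : i ∈ I then faceProd (fun _ => ν I) ⟨i, h⟩ b (I.restrict x) (I.restrict y) else 1

def gowersOffWeight (x y : ι → ZMod N) : ℝ :=
  ∏ I ∈ univ.filter (· ≠ univ),
    if i ∈ I then 1 else ∏ ω : I → Bool, ν I (proj ω (I.restrict x) (I.restrict y))

lemma prod_mul_weightProd_eq_gowersFace_mul (x y : ι → ZMod N) :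
    (∏ ω, f ω (proj ω x y)) * weightProd ν x y
      = gowersFace ν f i false x y * gowersFace ν f i true x y * gowersOffWeight ν i x y := by
  have hweight : ∀ I : Finset ι, ∏ ω : I → Bool, ν I (projI ω x y)
      = (if h : i ∈ I then faceProd (fun _ => ν I) ⟨i, h⟩ false (I.restrict x) (I.restrict y)
          else 1)
        * (if h : i ∈ I then faceProd (fun _ => ν I) ⟨i, h⟩ true (I.restrict x) (I.restrict y)
          else 1)
        * (if i ∈ I then 1 else ∏ ω : I → Bool, ν I (proj ω (I.restrict x) (I.restrict y))) := by
    intro I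
    by_cases h : i ∈ I
    · simp only [h, dite_true, if_true, mul_one]
      exact prod_eq_faceProd_mul_faceProd (fun _ => ν I) ⟨i, h⟩ (I.restrict x) (I.restrict y)
    · simp only [h, dite_false, if_false, one_mul]
      rfl
  rw [prod_eq_faceProd_mul_faceProd f i, weightProd, prod_congr rfl fun I _ => hweight I,
    prod_mul_distrib, prod_mul_distrib, gowersFace, gowersFace, gowersOffWeight]
  ring

lemma gowersFace_update_update (b : Bool) (x y : ι → ZMod N) (s t : ZMod N) :
    gowersFace ν f i b (update x i s) (update y i t)
      = gowersFace ν f i b (update x i (bif b then t else s))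
          (update y i (bif b then t else s)) := by
  unfold gowersFace
  congr 1
  · exact faceProd_update_update f i b x y s t
  · refine prod_congr rfl fun I _ => ?_
    split_ifs with h
    · simp only [restrict_update_of_mem h]
      exact faceProd_update_update _ _ b _ _ s t
    · rfl

lemma gowersOffWeight_update_update (x y : ι → ZMod N) (s t : ZMod N) :
    gowersOffWeight ν i (update x i s) (update y i t) = gowersOffWeight ν i x y :=
  prod_congr rfl fun I _ => by
    split_ifs with h
    · rfl
    · rw [restrict_update_of_notMem h, restrict_update_of_notMem h]

lemma gowersOffWeight_nonneg (hν : ∀ I : Finset ι, I ≠ univ → ∀ z, 0 ≤ ν I z)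
    (x y : ι → ZMod N) : 0 ≤ gowersOffWeight ν i x y :=
  prod_nonneg fun I hI => by
    split_ifs
    · exact zero_le_one
    · exact prod_nonneg fun ω _ => hν I (mem_filter.mp hI).2 _

lemma gowersFace_comp_update_self (b : Bool) :
    gowersFace ν (fun ω => f (update ω i b)) i b = gowersFace ν f i b := by
  funext x y
  rw [gowersFace, gowersFace, faceProd_comp_update_self]

lemma gowersFace_comp_update_not (b : Bool) (x y : ι → ZMod N) :
    gowersFace ν (fun ω => f (update ω i b)) i (!b) x y
      = gowersFace ν f i b (update x i (y i)) (update y i (x i)) := by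
  unfold gowersFace
  congr 1
  · exact faceProd_comp_update_not f i b x y
  · refine prod_congr rfl fun I _ => ?_
    split_ifs with h
    · rw [restrict_update_of_mem h, restrict_update_of_mem h]
      exact faceProd_comp_update_not (fun _ => ν I) ⟨i, h⟩ b _ _
    · rfl

variable [NeZero N]

/-- Moving `x i` and `y i` together is harmless: the face `b` reads only one of them. -/
def gowersFaceAvg (b : Bool) (x y : ι → ZMod N) : ℝ :=
  𝔼 c, gowersFace ν f i b (update x i c) (update y i c)

lemma gowersFaceAvg_comp_update (b c : Bool) :
    gowersFaceAvg ν (fun ω => f (update ω i b)) i c = gowersFaceAvg ν f i b := by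
  funext x y
  obtain rfl | rfl : c = b ∨ c = !b := by cases b <;> cases c <;> simp
  · rw [gowersFaceAvg, gowersFaceAvg, gowersFace_comp_update_self]
  · refine expect_congr rfl fun a _ => ?_
    rw [gowersFace_comp_update_not, update_self, update_self, update_idem, update_idem]

theorem gowersInner_eq_expect_gowersFaceAvg :
    gowersInner ν f = 𝔼 x, 𝔼 y,
      gowersFaceAvg ν f i false x y * gowersFaceAvg ν f i true x y * gowersOffWeight ν i x y := by
  rw [gowersInner]
  simp only [prod_mul_weightProd_eq_gowersFace_mul ν f i]
  rw [expect_expect_eq_expect_update_update i]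
  refine expect_congr rfl fun x _ => expect_congr rfl fun y _ => ?_
  calc 𝔼 a, 𝔼 b, gowersFace ν f i false (update x i a) (update y i b)
          * gowersFace ν f i true (update x i a) (update y i b)
          * gowersOffWeight ν i (update x i a) (update y i b)
      = 𝔼 a, 𝔼 b, gowersFace ν f i false (update x i a) (update y i a)
          * gowersFace ν f i true (update x i b) (update y i b) * gowersOffWeight ν i x y :=
        expect_congr rfl fun a _ => expect_congr rfl fun b _ => by
          rw [gowersFace_update_update ν f i false x y a b,
            gowersFace_update_update ν f i true x y a b, gowersOffWeight_update_update]
          rfl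
    _ = _ := by
        simp only [gowersFaceAvg, Finset.expect_mul, Finset.mul_expect]
        exact expect_comm ..

theorem gowersInner_comp_update (b : Bool) :
    gowersInner ν (fun ω => f (update ω i b))
      = 𝔼 x, 𝔼 y, gowersFaceAvg ν f i b x y ^ 2 * gowersOffWeight ν i x y := by
  simp only [gowersInner_eq_expect_gowersFaceAvg ν _ i, gowersFaceAvg_comp_update, sq]

variable {ν}

theorem gowersInner_comp_update_nonneg (hν : ∀ I : Finset ι, I ≠ univ → ∀ z, 0 ≤ ν I z)
    (b : Bool) :
    0 ≤ gowersInner ν (fun ω => f (update ω i b)) := by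
  rw [gowersInner_comp_update]
  exact expect_nonneg fun x _ => expect_nonneg fun y _ =>
    mul_nonneg (sq_nonneg _) (gowersOffWeight_nonneg ν i hν x y)

theorem gowersInner_sq_le (hν : ∀ I : Finset ι, I ≠ univ → ∀ z, 0 ≤ ν I z) :
    gowersInner ν f ^ 2 ≤ gowersInner ν (fun ω => f (update ω i false))
      * gowersInner ν (fun ω => f (update ω i true)) := by
  rw [gowersInner_eq_expect_gowersFaceAvg ν f i, gowersInner_comp_update, gowersInner_comp_update]
  simp only [← expect_product', univ_product_univ]
  exact expect_mul_mul_sq_le _ _ _ fun p => gowersOffWeight_nonneg ν i hν p.1 p.2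

end GowersFace

section BoxNorm

variable {ι : Type*} [Fintype ι] [DecidableEq ι] {N : ℕ} [NeZero N]
  {ν : (I : Finset ι) → (I → ZMod N) → ℝ}

theorem gowersInner_const_nonneg [Nonempty ι]
    (hν : ∀ I : Finset ι, I ≠ univ → ∀ z, 0 ≤ ν I z) (g : (ι → ZMod N) → ℝ) :
    0 ≤ gowersInner ν (fun _ => g) :=
  gowersInner_comp_update_nonneg (fun _ => g) (Classical.arbitrary ι) hν false

theorem boxNorm_pow_two_pow_card [Nonempty ι]
    (hν : ∀ I : Finset ι, I ≠ univ → ∀ z, 0 ≤ ν I z) (g : (ι → ZMod N) → ℝ) :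
    boxNorm ν g ^ 2 ^ Fintype.card ι = gowersInner ν (fun _ => g) := by
  rw [boxNorm,
    show ((2 : ℝ) ^ Fintype.card ι)⁻¹ = ((2 ^ Fintype.card ι : ℕ) : ℝ)⁻¹ by push_cast; rfl,
    Real.rpow_inv_natCast_pow (gowersInner_const_nonneg hν g) (by positivity)]

theorem abs_gowersInner_le_prod_boxNorm [Nonempty ι]
    (hν : ∀ I : Finset ι, I ≠ univ → ∀ z, 0 ≤ ν I z) (f : (ι → Bool) → (ι → ZMod N) → ℝ) :
    |gowersInner ν f| ≤ ∏ ω, boxNorm ν (f ω) := by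
  have hpow :=
    abs_pow_le_abs_prod_of_sq_le (gowersInner ν) (fun g i => gowersInner_sq_le g i hν) f
  rw [abs_of_nonneg (prod_nonneg fun ω _ => gowersInner_const_nonneg hν (f ω))] at hpow
  refine (pow_le_pow_iff_left₀ (abs_nonneg _) ?_ (pow_ne_zero (Fintype.card ι) two_ne_zero)).mp ?_
  · exact prod_nonneg fun ω _ => Real.rpow_nonneg (gowersInner_const_nonneg hν (f ω)) _
  · simpa only [← prod_pow, boxNorm_pow_two_pow_card hν] using hpow

end BoxNorm

/-- (a) the diagonal weighted Gowers inner product is nonnegative;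
(b) the Gowers–Cauchy–Schwarz inequality. -/
theorem gowers_nonneg_and_cauchy_schwarz (N d : ℕ) [NeZero N] (hd : 1 ≤ d)
    (ν : (I : Finset (Fin d)) → (I → ZMod N) → ℝ)
    (hν : ∀ I : Finset (Fin d), I ≠ univ → ∀ z, 0 ≤ ν I z) :
    (∀ f : (Fin d → ZMod N) → ℝ, 0 ≤ gowersInner ν (fun _ => f)) ∧
    (∀ f : (Fin d → Bool) → (Fin d → ZMod N) → ℝ,
      |gowersInner ν f| ≤ ∏ ω : Fin d → Bool, boxNorm ν (f ω)) := by
  have : Nonempty (Fin d) := ⟨⟨0, hd⟩⟩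
  exact ⟨gowersInner_const_nonneg hν, abs_gowersInner_le_prod_boxNorm hν⟩

end
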